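/- Let x = lim_{n→∞} στσ²τ⋯σⁿτ(aaa⋯) ∈ A^ℕ. Then there is a constant C such that p_x(n) ≤ C n for all n ≥ 1; in fact p_x(n) ≤ 27 n, although x is not linearly recurrent. -/

import Mathlib

namespace DurandLR

variable {A B : Type*}

/-- `u` occurs at position `i` in the one-sided sequence `x`. -/
def OccursAt (x : ℕ → A) (u : List A) (i : ℕ) : Prop :=
  ∀ k : Fin u.length, x (i + (k : ℕ)) = u.get k

/-- `u` occurs (somewhere) in the one-sided sequence `x`. -/
def Occurs (x : ℕ → A) (u : List A) : Prop := ∃ i, OccursAt x u i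

/-- `u` occurs at position `i` in the two-sided sequence `x`. -/
def OccursAtZ (x : ℤ → A) (u : List A) (i : ℤ) : Prop :=
  ∀ k : Fin u.length, x (i + (k : ℕ)) = u.get k

def OccursZ (x : ℤ → A) (u : List A) : Prop := ∃ i, OccursAtZ x u i

/-- The word `u` has exactly `m` occurrences in the finite word `w`. -/
def OccCountEq (u w : List A) (m : ℕ) : Prop :=
  {i : ℕ | u <+: w.drop i}.ncard = m

/-- `w` is a return word to `u` in the one-sided sequence `x`: `wu` occurs in `x`,
`u` is a prefix of `wu` and `u` has exactly two occurrences in `wu`. -/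
def IsReturnWord (x : ℕ → A) (u w : List A) : Prop :=
  Occurs x (w ++ u) ∧ u <+: (w ++ u) ∧ OccCountEq u (w ++ u) 2

/-- `w` is a return word to `u` in the two-sided sequence `x`. -/
def IsReturnWordZ (x : ℤ → A) (u w : List A) : Prop :=
  OccursZ x (w ++ u) ∧ u <+: (w ++ u) ∧ OccCountEq u (w ++ u) 2

/-- `x` is uniformly recurrent: every word occurring in `x` occurs with bounded gaps. -/
def UniformlyRecurrent (x : ℕ → A) : Prop :=
  ∀ u, Occurs x u → ∃ M : ℕ, ∀ i : ℕ, ∃ j, i ≤ j ∧ j < i + M ∧ OccursAt x u j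

def UniformlyRecurrentZ (x : ℤ → A) : Prop :=
  ∀ u, OccursZ x u → ∃ M : ℕ, ∀ i : ℤ, ∃ j : ℤ, i ≤ j ∧ j < i + M ∧ OccursAtZ x u j

/-- `x` is linearly recurrent with constant `K`. -/
def LinearlyRecurrentWith (x : ℕ → A) (K : ℕ) : Prop :=
  UniformlyRecurrent x ∧ ∀ u w, IsReturnWord x u w → w.length ≤ K * u.length

def LinearlyRecurrent (x : ℕ → A) : Prop := ∃ K, LinearlyRecurrentWith x K

def LinearlyRecurrentZ (x : ℤ → A) : Prop :=
  UniformlyRecurrentZ x ∧ ∃ K : ℕ, ∀ u w, IsReturnWordZ x u w → w.length ≤ K * u.length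

/-- The subshift generated by a two-sided sequence `x` : all `z` whose finite subwords
occur in `x`. -/
def SubshiftGenZ (x : ℤ → A) : Set (ℤ → A) := {z | ∀ u, OccursZ z u → OccursZ x u}

/-- The subshift generated by a one-sided sequence `x`. -/
def SubshiftGen (x : ℕ → A) : Set (ℤ → A) := {z | ∀ u, OccursZ z u → Occurs x u}

/-- A minimal subshift: nonempty and every element generates it. -/
def IsMinimalSubshift (X : Set (ℤ → A)) : Prop :=
  X.Nonempty ∧ ∀ z ∈ X, X = SubshiftGenZ z

/-- A linearly recurrent subshift: minimal and containing an LR sequence. -/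
def IsLRSubshift (X : Set (ℤ → A)) : Prop :=
  IsMinimalSubshift X ∧ ∃ x ∈ X, LinearlyRecurrentZ x

def IsPeriodic (z : ℤ → A) : Prop := ∃ p : ℕ, 0 < p ∧ ∀ n : ℤ, z (n + p) = z n

/-- Image of a finite word under a morphism (substitution). -/
def wordMap (σ : A → List B) : List A → List B
  | [] => []
  | a :: u => σ a ++ wordMap σ u

/-- Composition of two morphisms: `compM σ τ = σ ∘ τ`. -/
def compM (σ τ : A → List A) : A → List A := fun b => wordMap σ (τ b)

/-- Iterate of a morphism: `powM σ n = σ^n`. -/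
def powM (σ : A → List A) : ℕ → A → List A
  | 0 => fun b => [b]
  | n + 1 => compM σ (powM σ n)

/-- `chain σ r n = σ_r ∘ σ_{r+1} ∘ ⋯ ∘ σ_{r+n-1}` (the empty composition for `n = 0`). -/
def chain (σ : ℕ → A → List A) (r : ℕ) : ℕ → A → List A
  | 0 => fun b => [b]
  | n + 1 => fun b => wordMap (chain σ r n) (σ (r + n) b)

/-- The periodic infinite sequence `www⋯` obtained by repeating the word `w`
(with a default letter for the degenerate empty case). -/
def repSeq (w : List A) (d : A) : ℕ → A := fun i => w.getD (i % w.length) d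

/-- The prefix of length `n` of the sequence `x`, as a word. -/
def seqTake (x : ℕ → A) (n : ℕ) : List A := (List.range n).map x

/-- `y` is the image of the infinite sequence `z` under the morphism `σ`:
the image of every prefix of `z` is a prefix of `y`. -/
def IsSeqImage (σ : A → List B) (z : ℕ → A) (y : ℕ → B) : Prop :=
  ∀ n, seqTake y (wordMap σ (seqTake z n)).length = wordMap σ (seqTake z n)

/-- `σ_0 σ_1 ⋯ σ_n (aaa⋯)` converges to `x` in the product topology, where the `n`-th
approximation is the periodic sequence obtained by repeating the word `W n`. -/
def ConvergesTo (W : ℕ → List A) (d : A) (x : ℕ → A) : Prop :=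
  ∀ m, ∃ N, ∀ n ≥ N, repSeq (W n) d m = x m

/-- A proper morphism: all images begin with the same letter and end with the same letter. -/
def ProperMorphism (σ : A → List A) : Prop :=
  ∃ l r : A, ∀ b, (σ b).head? = some l ∧ (σ b).getLast? = some r

/-- Primitivity with constant `s₀` of a directive sequence of morphisms
`σ_n : A_{n+1} → A_n^*`: every `b ∈ A_r` occurs in `σ_{r+1} ⋯ σ_{r+s₀} (c)`
for every `c ∈ A_{r+s₀+1}`. -/
def PrimitiveWith (σ : ℕ → A → List A) (Aseq : ℕ → Set A) (s0 : ℕ) : Prop :=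
  ∀ r : ℕ, ∀ b ∈ Aseq r, ∀ c ∈ Aseq (r + s0 + 1), b ∈ chain σ (r + 1) s0 c

/-- The data of an S-adic system: `a` belongs to every alphabet and
`σ_n` maps `A_{n+1}` into words over `A_n`. -/
def SAdicSystem (σ : ℕ → A → List A) (Aseq : ℕ → Set A) (a : A) : Prop :=
  (∀ n, a ∈ Aseq n) ∧ (∀ n, ∀ b ∈ Aseq (n + 1), ∀ c ∈ σ n b, c ∈ Aseq n)

/-- `x` is the S-adic sequence generated by the directive sequence `σ` and letter `a`:
`σ_0 σ_1 ⋯ σ_n (aaa⋯)` converges to `x`. -/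
def GeneratesSAdic (σ : ℕ → A → List A) (Aseq : ℕ → Set A) (a : A) (x : ℕ → A) : Prop :=
  SAdicSystem σ Aseq a ∧ ConvergesTo (fun n => chain σ 0 (n + 1) a) a x

/-- The complexity function `p_x(n)`: the number of distinct words of length `n`
occurring in `x`. -/
noncomputable def complexity (x : ℕ → A) (n : ℕ) : ℕ := {u : List A | u.length = n ∧ Occurs x u}.ncard

/-- Any two successive occurrences of `u` in `x` differ by at most `M`. -/
def GapsBoundedBy (x : ℕ → A) (u : List A) (M : ℕ) : Prop :=
  ∀ i j, OccursAt x u i → OccursAt x u j → i < j →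
    (∀ k, i < k → k < j → ¬ OccursAt x u k) → j - i ≤ M

/-- The finite word `x_{[p,q)}` of a two-sided sequence. -/
def zSeg (x : ℤ → A) (p q : ℤ) : List A := (List.range (q - p).toNat).map fun t => x (p + t)

/-- `w` is a return word to `u.v` in the two-sided sequence `x`: there are two
consecutive occurrences `j < k` of `uv` in `x` with `w = x_{[j+|u|, k+|u|)}`. -/
def IsReturnWordUV (x : ℤ → A) (u v w : List A) : Prop :=
  ∃ j k : ℤ, OccursAtZ x (u ++ v) j ∧ OccursAtZ x (u ++ v) k ∧ j < k ∧
    (∀ i : ℤ, j < i → i < k → ¬ OccursAtZ x (u ++ v) i) ∧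
    w = zSeg x (j + u.length) (k + u.length)

/-- The substitution `σ` on `{a,b,c} = {0,1,2}`: `σ(a)=acb`, `σ(b)=bab`, `σ(c)=cbc`. -/
def sigma3 : Fin 3 → List (Fin 3) := ![[0, 2, 1], [1, 0, 1], [2, 1, 2]]

/-- The substitution `τ` on `{a,b,c} = {0,1,2}`: `τ(a)=abc`, `τ(b)=acb`, `τ(c)=aac`. -/
def tau3 : Fin 3 → List (Fin 3) := ![[0, 1, 2], [0, 2, 1], [0, 0, 2]]

/-- `rho n = σ τ σ² τ ⋯ σⁿ τ` (identity for `n = 0`). -/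
def rho : ℕ → Fin 3 → List (Fin 3)
  | 0 => fun b => [b]
  | n + 1 => compM (rho n) (compM (powM sigma3 (n + 1)) tau3)

/-- `psi n l = σ^{n+2} τ σ^{n+3} τ ⋯ σ^{n+l+1} τ` (identity for `l = 0`). -/
def psi (n : ℕ) : ℕ → Fin 3 → List (Fin 3)
  | 0 => fun b => [b]
  | l + 1 => compM (psi n l) (compM (powM sigma3 (n + 2 + l)) tau3)

/-- The Sturmian substitution `τ` on `{0,1}`: `τ(0)=0`, `τ(1)=10`. -/
def tau2 : Fin 2 → List (Fin 2) := ![[0], [1, 0]]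

/-- The Sturmian substitution `σ` on `{0,1}`: `σ(0)=01`, `σ(1)=1`. -/
def sigma2 : Fin 2 → List (Fin 2) := ![[0, 1], [1]]

/-- `xi i k = τ^{i₁} σ^{i₂} τ^{i₃} ⋯ τ^{i_{2k-1}} σ^{i_{2k}}` (identity for `k = 0`). -/
def xi (i : ℕ → ℕ) : ℕ → Fin 2 → List (Fin 2)
  | 0 => fun b => [b]
  | k + 1 => compM (xi i k) (compM (powM tau2 (i (2 * k + 1))) (powM sigma2 (i (2 * k + 2))))

/-- `a : ℕ → ℕ` gives (from index 1 on) the continued fraction expansion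
`α = [0; a₁, a₂, a₃, …]`, expressed through the Gauss map. -/
def IsCFExpansion (α : ℝ) (a : ℕ → ℕ) : Prop :=
  ∃ β : ℕ → ℝ, β 0 = α ∧ ∀ n : ℕ,
    0 < β n ∧ β n < 1 ∧ (a (n + 1) : ℤ) = ⌊1 / β n⌋ ∧ β (n + 1) = 1 / β n - ⌊1 / β n⌋

/-!
Flattening `ρ_n = στσ²τ⋯σⁿτ` gives the directive sequence `σ, τ, σ, σ, τ, σ, σ, σ, τ, …` of
morphisms of constant length 3, so `x` is the bottom of a tower of sequences, each the image of the
next one. A factor of `x` of length `n ≤ 3^k` lies in the images of two consecutive letters of level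
`k` under a morphism of constant length `3^k`; taking `3^k ≤ 3n` gives `p_x(n) ≤ 9 · 3^k ≤ 27 n`.

In an image under `σ` or `τ` the word `ca` occurs only at positions `≡ 2 mod 3`, and in an image
under `σ` only above an occurrence of `ca`. Hence images of words containing `ca` are recognizable,
and below a run of `K + 1` letters `σ` starting at level `D`, the occurrences of `ca` are at least
`3^(K+2)` apart. So the image `u` of `ca` at level 0, of length `2 · 3^D`, has occurrences at least
`3^(D+K+2)` apart, hence return words longer than `K |u|`; it does occur infinitely often, since
under every `τ` each letter other than `b` creates a `ca`.
-/

section Words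

variable {C : Type*}

@[simp]
theorem wordMap_cons (f : A → List B) (a : A) (w : List A) :
    wordMap f (a :: w) = f a ++ wordMap f w := rfl

theorem wordMap_eq_flatMap (f : A → List B) (w : List A) : wordMap f w = w.flatMap f := by
  induction w with
  | nil => rfl
  | cons a w ih => simp [ih]

theorem wordMap_append (f : A → List B) (u v : List A) :
    wordMap f (u ++ v) = wordMap f u ++ wordMap f v := by
  simp [wordMap_eq_flatMap]

theorem wordMap_singleton (f : A → List B) (a : A) : wordMap f [a] = f a := by
  simp [wordMap_eq_flatMap]

theorem wordMap_pure (w : List A) : wordMap (fun a => [a]) w = w := by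
  simp [wordMap_eq_flatMap]

theorem wordMap_wordMap (g : A → List B) (f : B → List C) (w : List A) :
    wordMap f (wordMap g w) = wordMap (fun a => wordMap f (g a)) w := by
  simp [wordMap_eq_flatMap, List.flatMap_assoc]

theorem length_wordMap {f : A → List B} {L : ℕ} (hf : ∀ a, (f a).length = L) (w : List A) :
    (wordMap f w).length = L * w.length := by
  simp [wordMap_eq_flatMap, List.length_flatMap, hf, mul_comm]

theorem wordMap_infix_wordMap {u w : List A} (h : u <:+: w) (f : A → List B) :
    wordMap f u <:+: wordMap f w := by
  simpa [wordMap_eq_flatMap] using h.flatMap f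

end Words

section Chains

theorem chain_one (σ : ℕ → A → List A) (r : ℕ) : chain σ r 1 = σ r := by
  funext b
  exact wordMap_pure (σ r b)

theorem chain_add (σ : ℕ → A → List A) (r m p : ℕ) (b : A) :
    chain σ r (m + p) b = wordMap (chain σ r m) (chain σ (r + m) p b) := by
  induction p generalizing b with
  | zero => exact (wordMap_singleton _ _).symm
  | succ p ih =>
    rw [← Nat.add_assoc, chain, chain, funext ih, wordMap_wordMap, Nat.add_assoc]

theorem chain_succ' (σ : ℕ → A → List A) (r k : ℕ) (b : A) :
    chain σ r (k + 1) b = wordMap (σ r) (chain σ (r + 1) k b) := by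
  rw [Nat.add_comm, chain_add, chain_one]

theorem wordMap_chain_succ (σ : ℕ → A → List A) (r k : ℕ) (w : List A) :
    wordMap (chain σ r (k + 1)) w = wordMap (chain σ r k) (wordMap (σ (r + k)) w) :=
  (wordMap_wordMap _ _ _).symm

theorem powM_succ' (f : A → List A) (k : ℕ) (b : A) :
    powM f (k + 1) b = wordMap (powM f k) (f b) := by
  induction k generalizing b with
  | zero => exact (wordMap_singleton f b).trans (wordMap_pure (f b)).symm
  | succ k ih => exact (congrArg (wordMap f) (ih b)).trans (wordMap_wordMap _ _ _)

theorem chain_eq_powM {σ : ℕ → A → List A} {f : A → List A} {r k : ℕ}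
    (h : ∀ l < k, σ (r + l) = f) : chain σ r k = powM f k := by
  induction k with
  | zero => rfl
  | succ k ih =>
    funext b
    rw [chain, powM_succ', h k k.lt_succ_self, ih fun l hl => h l (hl.trans k.lt_succ_self)]

end Chains

section Occurrences

variable {x : ℕ → A} {u v : List A} {i : ℕ}

theorem occursAt_iff_getElem : OccursAt x u i ↔ ∀ k (hk : k < u.length), x (i + k) = u[k] :=
  ⟨fun h k hk => h ⟨k, hk⟩, fun h k => h k k.2⟩

theorem occursAt_nil (x : ℕ → A) (i : ℕ) : OccursAt x [] i := fun k => k.elim0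

theorem occursAt_append :
    OccursAt x (u ++ v) i ↔ OccursAt x u i ∧ OccursAt x v (i + u.length) := by
  simp only [occursAt_iff_getElem, List.length_append]
  refine ⟨fun h => ⟨fun k hk => ?_, fun k hk => ?_⟩, fun ⟨hu, hv⟩ k hk => ?_⟩
  · rw [h k (by omega), List.getElem_append_left hk]
  · rw [Nat.add_assoc, h _ (by omega), List.getElem_append_right (by omega)]
    simp
  · rcases lt_or_ge k u.length with hk' | hk'
    · rw [hu k hk', List.getElem_append_left hk']
    · rw [List.getElem_append_right hk', ← hv _ (by omega)]
      congr 1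
      omega

theorem occursAt_singleton {a : A} : OccursAt x [a] i ↔ x i = a := by
  simp [occursAt_iff_getElem]

theorem occursAt_cons {a : A} : OccursAt x (a :: u) i ↔ x i = a ∧ OccursAt x u (i + 1) := by
  rw [← List.singleton_append, occursAt_append, occursAt_singleton, List.length_singleton]

theorem occursAt_pair {a b : A} : OccursAt x [a, b] i ↔ x i = a ∧ x (i + 1) = b := by
  rw [occursAt_cons, occursAt_singleton]

theorem occursAt_seqTake (x : ℕ → A) (i n : ℕ) : OccursAt x (seqTake (fun t => x (i + t)) n) i :=
  occursAt_iff_getElem.2 fun k hk => by simp [seqTake]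

theorem OccursAt.eq_of_length_eq (hu : OccursAt x u i) (hv : OccursAt x v i)
    (h : u.length = v.length) : u = v :=
  List.ext_getElem h fun k h₁ h₂ =>
    ((occursAt_iff_getElem.1 hu k h₁).symm.trans (occursAt_iff_getElem.1 hv k h₂))

theorem OccursAt.of_prefix (hv : OccursAt x v i) (h : u <+: v) : OccursAt x u i := by
  obtain ⟨t, rfl⟩ := h
  exact (occursAt_append.1 hv).1

theorem OccursAt.drop (hv : OccursAt x v i) (r : ℕ) : OccursAt x (v.drop r) (i + r) :=
  occursAt_iff_getElem.2 fun k hk => by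
    rw [List.getElem_drop, Nat.add_assoc, occursAt_iff_getElem.1 hv]

theorem OccursAt.take_drop (hv : OccursAt x v i) (r n : ℕ) :
    OccursAt x ((v.drop r).take n) (i + r) :=
  (hv.drop r).of_prefix (List.take_prefix _ _)

theorem OccursAt.take_drop_eq {r : ℕ} (hv : OccursAt x v i) (hu : OccursAt x u (i + r))
    (h : r + u.length ≤ v.length) : (v.drop r).take u.length = u :=
  (hv.take_drop r u.length).eq_of_length_eq hu (by simp; omega)

end Occurrences

section ReturnWords

variable {x : ℕ → A} {u : List A} {i j : ℕ}

theorem exists_isReturnWord (hu : u ≠ []) (hi : OccursAt x u i) (hj : OccursAt x u j)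
    (hij : i < j) : ∃ k w, i < k ∧ OccursAt x u k ∧ w.length = k - i ∧ IsReturnWord x u w := by
  classical
  have hex : ∃ k, i < k ∧ OccursAt x u k := ⟨j, hij, hj⟩
  obtain ⟨hik, hk⟩ := Nat.find_spec hex
  set k := Nat.find hex
  set w := seqTake (fun t => x (i + t)) (k - i)
  have hw : w.length = k - i := by simp [w, seqTake]
  have hwu : OccursAt x (w ++ u) i :=
    occursAt_append.2 ⟨occursAt_seqTake x i _, by rwa [hw, Nat.add_sub_cancel' hik.le]⟩
  have hpre : u <+: w ++ u :=
    List.prefix_iff_eq_take.2 (hi.eq_of_length_eq (hwu.of_prefix (List.take_prefix _ _)) (by simp))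
  have hocc : {m | u <+: (w ++ u).drop m} = {0, w.length} := by
    ext m
    simp only [Set.mem_ofPred_eq, Set.mem_insert_iff, Set.mem_singleton_iff]
    refine ⟨fun hm => ?_, ?_⟩
    · have hle : m ≤ w.length := by
        have h₁ := hm.length_le
        have h₂ := List.length_pos_iff.2 hu
        simp only [List.length_drop, List.length_append] at h₁
        omega
      by_contra! hne
      exact Nat.find_min hex (show i + m < k by omega) ⟨by omega, (hwu.drop m).of_prefix hm⟩
    · rintro (rfl | rfl) <;> simp [hpre]
  exact ⟨k, w, hik, hk, hw, ⟨i, hwu⟩, hpre, by rw [OccCountEq, hocc, Set.ncard_pair (by omega)]⟩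

theorem not_linearlyRecurrent_of_sparse
    (h : ∀ K, ∃ u : List A, u ≠ [] ∧ (∃ i j, i < j ∧ OccursAt x u i ∧ OccursAt x u j) ∧
      ∀ i j, OccursAt x u i → OccursAt x u j → i < j → K * u.length < j - i) :
    ¬ LinearlyRecurrent x := by
  rintro ⟨K, -, hK⟩
  obtain ⟨u, hu, ⟨i, j, hij, hi, hj⟩, hsparse⟩ := h K
  obtain ⟨k, w, hik, hk, hw, hret⟩ := exists_isReturnWord hu hi hj hij
  have := hK u w hret
  have := hsparse i k hi hk hik
  omega

end ReturnWords

structure IsBlockImage (φ : B → List A) (L : ℕ) (z : ℕ → B) (y : ℕ → A) : Prop where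
  length_eq : ∀ b, (φ b).length = L
  occursAt : ∀ i, OccursAt y (φ (z i)) (L * i)

namespace IsBlockImage

variable {C : Type*} {φ : B → List A} {L : ℕ} {z : ℕ → B} {y : ℕ → A}

theorem of_forall_occursAt_zero (hφ : ∀ b, (φ b).length = L)
    (h : ∀ i, ∃ W : List B, i < W.length ∧ OccursAt z W 0 ∧ OccursAt y (wordMap φ W) 0) :
    IsBlockImage φ L z y where
  length_eq := hφ
  occursAt i := by
    obtain ⟨W, hi, hz, hy⟩ := h i
    have hzi : W[i] = z i := by simpa using (occursAt_iff_getElem.1 hz i hi).symm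
    rw [← List.take_append_drop i W, List.drop_eq_getElem_cons hi, wordMap_append,
      wordMap_cons, hzi, occursAt_append, length_wordMap hφ, List.length_take,
      min_eq_left hi.le, Nat.zero_add, occursAt_append] at hy
    exact hy.2.1

theorem occursAt_wordMap (h : IsBlockImage φ L z y) {W : List B} {q : ℕ}
    (hW : OccursAt z W q) : OccursAt y (wordMap φ W) (L * q) := by
  induction W generalizing q with
  | nil => exact occursAt_nil _ _
  | cons b W ih =>
    obtain ⟨rfl, hW'⟩ := occursAt_cons.1 hW
    exact occursAt_append.2 ⟨h.occursAt q, by rw [h.length_eq, ← Nat.mul_succ]; exact ih hW'⟩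

theorem occursAt_of_occursAt_wordMap (h : IsBlockImage φ L z y) (hφ : Function.Injective φ)
    {W : List B} {q : ℕ} (hW : OccursAt y (wordMap φ W) (L * q)) : OccursAt z W q := by
  induction W generalizing q with
  | nil => exact occursAt_nil _ _
  | cons b W ih =>
    rw [wordMap_cons, occursAt_append, h.length_eq, ← Nat.mul_succ] at hW
    exact occursAt_cons.2
      ⟨hφ ((h.occursAt q).eq_of_length_eq hW.1 (by rw [h.length_eq, h.length_eq])), ih hW.2⟩

theorem occursAt_append_succ (h : IsBlockImage φ L z y) (i : ℕ) :
    OccursAt y (φ (z i) ++ φ (z (i + 1))) (L * i) :=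
  occursAt_append.2 ⟨h.occursAt i, by rw [h.length_eq, ← Nat.mul_succ]; exact h.occursAt _⟩

theorem comp {ψ : C → List B} {M : ℕ} {v : ℕ → C} (h : IsBlockImage φ L z y)
    (h' : IsBlockImage ψ M v z) : IsBlockImage (fun c => wordMap φ (ψ c)) (L * M) v y where
  length_eq c := by rw [length_wordMap h.length_eq, h'.length_eq]
  occursAt i := by rw [Nat.mul_assoc]; exact h.occursAt_wordMap (h'.occursAt i)

theorem complexity_le [Fintype B] (h : IsBlockImage φ L z y) (hL : 0 < L) {n : ℕ}
    (hn : n ≤ L) : complexity y n ≤ Fintype.card B ^ 2 * L := by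
  let window : B × B × Fin L → List A := fun t => ((φ t.1 ++ φ t.2.1).drop t.2.2).take n
  have hsub : {u | u.length = n ∧ Occurs y u} ⊆ Set.range window := by
    rintro u ⟨rfl, q, hq⟩
    refine ⟨(z (q / L), z (q / L + 1), ⟨q % L, Nat.mod_lt q hL⟩), ?_⟩
    refine (h.occursAt_append_succ (q / L)).take_drop_eq (by rwa [Nat.div_add_mod]) ?_
    simp only [List.length_append, h.length_eq]
    have := Nat.mod_lt q hL
    omega
  calc complexity y n ≤ (Set.range window).ncard := Set.ncard_le_ncard hsub (Set.finite_range _)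
    _ ≤ (Set.univ : Set (B × B × Fin L)).ncard := by rw [← Set.image_univ]; exact Set.ncard_image_le
    _ = Fintype.card B ^ 2 * L := by simp [Nat.card_eq_fintype_card]; ring

end IsBlockImage

section Directive

/-- The number of elementary morphisms composed in `rho n`. -/
def rhoDepth : ℕ → ℕ
  | 0 => 0
  | n + 1 => rhoDepth n + (n + 2)

theorem rhoDepth_strictMono : StrictMono rhoDepth :=
  strictMono_nat_of_lt_succ fun n => by simp only [rhoDepth]; omega

open Classical in
/-- The directive sequence `σ, τ, σ, σ, τ, σ, σ, σ, τ, …` obtained by flattening `rho`. -/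
noncomputable def directive (j : ℕ) : Fin 3 → List (Fin 3) :=
  if ∃ n, j + 1 = rhoDepth (n + 1) then tau3 else sigma3

theorem directive_eq (j : ℕ) : directive j = sigma3 ∨ directive j = tau3 := by
  unfold directive
  split_ifs <;> simp

theorem directive_rhoDepth_add_of_le {n l : ℕ} (hl : l ≤ n) :
    directive (rhoDepth n + l) = sigma3 := by
  rw [directive, if_neg]
  rintro ⟨m, hm⟩
  have h₁ : n < m + 1 := rhoDepth_strictMono.lt_iff_lt.1 (by omega)
  have h₂ : rhoDepth (n + 1) ≤ rhoDepth (m + 1) := rhoDepth_strictMono.le_iff_le.2 h₁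
  simp only [rhoDepth] at h₂ hm
  omega

theorem directive_rhoDepth_add_self (n : ℕ) : directive (rhoDepth n + n + 1) = tau3 :=
  if_pos ⟨n, rfl⟩

theorem directive_length (j : ℕ) (b : Fin 3) : (directive j b).length = 3 := by
  rcases directive_eq j with h | h <;> rw [h] <;> revert b <;> decide

theorem directive_injective (j : ℕ) : Function.Injective (directive j) := by
  rcases directive_eq j with h | h <;> rw [h] <;> decide

theorem rho_eq_chain (n : ℕ) : rho n = chain directive 0 (rhoDepth n) := by
  induction n with
  | zero => rfl
  | succ n ih =>
    funext b
    have hpow : chain directive (rhoDepth n) (n + 1) = powM sigma3 (n + 1) :=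
      chain_eq_powM fun l hl => directive_rhoDepth_add_of_le (by omega)
    rw [rhoDepth, chain_add, Nat.zero_add, chain, hpow, ← Nat.add_assoc,
      directive_rhoDepth_add_self, ← ih]
    rfl

end Directive

section Levels

/-- The sequence `lim_k directive j ⋯ directive (j + k - 1) (a)`; `x` is `level 0`. -/
noncomputable def level (j : ℕ) : ℕ → Fin 3 := fun i => (chain directive j (i + 1) 0).getD i 0

theorem length_chain_directive (j k : ℕ) (b : Fin 3) : (chain directive j k b).length = 3 ^ k := by
  induction k generalizing b with
  | zero => rfl
  | succ k ih => rw [chain, length_wordMap ih, directive_length, pow_succ]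

theorem chain_directive_prefix_succ (j k : ℕ) :
    chain directive j k 0 <+: chain directive j (k + 1) 0 := by
  obtain ⟨l, hl⟩ : ∃ l, directive (j + k) 0 = 0 :: l := by
    rcases directive_eq (j + k) with h | h <;> rw [h] <;> exact ⟨_, rfl⟩
  show _ <+: wordMap (chain directive j k) (directive (j + k) 0)
  rw [hl, wordMap_cons]
  exact List.prefix_append _ _

theorem chain_directive_prefix (j : ℕ) {k k' : ℕ} (h : k ≤ k') :
    chain directive j k 0 <+: chain directive j k' 0 := by
  induction h with
  | refl => exact List.prefix_refl _
  | step _ ih => exact ih.trans (chain_directive_prefix_succ j _)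

theorem lt_length_chain_directive (j t : ℕ) (b : Fin 3) :
    t < (chain directive j (t + 1) b).length := by
  rw [length_chain_directive]
  exact (Nat.lt_succ_self t).trans (Nat.lt_pow_self (by norm_num))

theorem occursAt_level_chain (j k : ℕ) : OccursAt (level j) (chain directive j k 0) 0 :=
  occursAt_iff_getElem.2 fun t ht => by
    rw [Nat.zero_add, level, List.getD_eq_getElem _ _ (lt_length_chain_directive j t 0)]
    rcases le_total (t + 1) k with h | h
    · exact (chain_directive_prefix j h).getElem _
    · exact ((chain_directive_prefix j h).getElem ht).symm

theorem isBlockImage_level (j : ℕ) : IsBlockImage (directive j) 3 (level (j + 1)) (level j) :=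
  .of_forall_occursAt_zero (directive_length j) fun i =>
    ⟨_, lt_length_chain_directive (j + 1) i 0, occursAt_level_chain _ _, by
      rw [← chain_succ']; exact occursAt_level_chain _ _⟩

theorem isBlockImage_level_chain (j k : ℕ) :
    IsBlockImage (chain directive j k) (3 ^ k) (level (j + k)) (level j) := by
  induction k generalizing j with
  | zero => exact ⟨fun _ => rfl, fun i => by simpa [chain] using occursAt_singleton.2 rfl⟩
  | succ k ih =>
    have h := (isBlockImage_level j).comp (ih (j + 1))
    rwa [← funext (chain_succ' directive j k), ← pow_succ', Nat.add_right_comm, Nat.add_assoc] at h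

theorem eq_level_zero_of_convergesTo {x : ℕ → Fin 3} (hx : ConvergesTo (fun n => rho n 0) 0 x) :
    x = level 0 := by
  funext m
  obtain ⟨N, hN⟩ := hx m
  set n := max N (m + 1)
  have hm : m + 1 ≤ rhoDepth n := (le_max_right N (m + 1)).trans (rhoDepth_strictMono.id_le n)
  have hlen : m < (chain directive 0 (rhoDepth n) 0).length :=
    (lt_length_chain_directive 0 m 0).trans_le (chain_directive_prefix 0 hm).length_le
  rw [← hN n (le_max_left _ _), repSeq]
  beta_reduce
  rw [rho_eq_chain, Nat.mod_eq_of_lt hlen, level,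
    List.getD_eq_getElem _ _ hlen, List.getD_eq_getElem _ _ (lt_length_chain_directive 0 m 0)]
  exact ((chain_directive_prefix 0 hm).getElem _).symm

end Levels

abbrev ca : List (Fin 3) := [2, 0]

section Blocks

variable {θ : Fin 3 → List (Fin 3)} {v y : ℕ → Fin 3} {i : ℕ}

theorem mod_three_of_occursAt_ca (hθ : θ = sigma3 ∨ θ = tau3) (h : IsBlockImage θ 3 v y) {p : ℕ}
    (hp : OccursAt y ca p) : p % 3 = 2 := by
  have hwin := (h.occursAt_append_succ (p / 3)).take_drop_eq (r := p % 3)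
    (by rwa [Nat.div_add_mod]) (by simp [h.length_eq]; omega)
  have key : ∀ d d' : Fin 3, ∀ r : Fin 3, ((θ d ++ θ d').drop r).take 2 = ca → (r : ℕ) = 2 := by
    rcases hθ with rfl | rfl <;> decide
  exact key _ _ ⟨p % 3, Nat.mod_lt _ (by norm_num)⟩ hwin

theorem occursAt_ca_of_sigma (h : IsBlockImage sigma3 3 v y) (hi : OccursAt y ca (3 * i + 2)) :
    OccursAt v ca i := by
  have key : ∀ d d' : Fin 3, ((sigma3 d ++ sigma3 d').drop 2).take 2 = ca → d = 2 ∧ d' = 0 := by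
    decide
  exact occursAt_pair.2
    (key _ _ ((h.occursAt_append_succ i).take_drop_eq hi (by simp [h.length_eq])))

theorem occursAt_ca_of_tau (h : IsBlockImage tau3 3 v y) (hi : v i ≠ 1) :
    OccursAt y ca (3 * i + 2) := by
  have key : ∀ d d' : Fin 3, d ≠ 1 → ((tau3 d ++ tau3 d').drop 2).take 2 = ca := by decide
  simpa [key _ _ hi] using (h.occursAt_append_succ i).take_drop 2 2

theorem take_drop_wordMap_ca (hθ : θ = sigma3 ∨ θ = tau3) :
    ((wordMap θ ca).drop 2).take 2 = ca := by
  rcases hθ with rfl | rfl <;> rfl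

theorem occursAt_ca_three_mul_add_two (hθ : θ = sigma3 ∨ θ = tau3) (h : IsBlockImage θ 3 v y)
    (hi : OccursAt v ca i) : OccursAt y ca (3 * i + 2) := by
  have h₂ := (h.occursAt_wordMap hi).take_drop 2 2
  rwa [take_drop_wordMap_ca hθ] at h₂

theorem ca_infix_wordMap (hθ : θ = sigma3 ∨ θ = tau3) {W : List (Fin 3)} (hW : ca <:+: W) :
    ca <:+: wordMap θ W :=
  (by rcases hθ with rfl | rfl <;> decide : ca <:+: wordMap θ ca).trans (wordMap_infix_wordMap hW θ)

theorem dvd_of_occursAt_wordMap (hθ : θ = sigma3 ∨ θ = tau3) (h : IsBlockImage θ 3 v y)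
    {W : List (Fin 3)} (hW : ca <:+: W) {q : ℕ} (hq : OccursAt y (wordMap θ W) q) : 3 ∣ q := by
  obtain ⟨s, t, rfl⟩ := hW
  rw [wordMap_append, wordMap_append, occursAt_append, occursAt_append,
    length_wordMap h.length_eq] at hq
  have hca := hq.1.2.take_drop 2 2
  rw [take_drop_wordMap_ca hθ] at hca
  have := mod_three_of_occursAt_ca hθ h hca
  omega

theorem exists_ne_one (hθ : θ = sigma3 ∨ θ = tau3) (h : IsBlockImage θ 3 v y) (p : ℕ) :
    ∃ q, p ≤ q ∧ y q ≠ 1 := by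
  have key : ∀ d : Fin 3, ∃ e ∈ θ d, e ≠ 1 := by rcases hθ with rfl | rfl <;> decide
  obtain ⟨e, he, he1⟩ := key (v p)
  obtain ⟨k, hk, rfl⟩ := List.mem_iff_getElem.1 he
  exact ⟨3 * p + k, by omega, by rwa [occursAt_iff_getElem.1 (h.occursAt p) k hk]⟩

end Blocks

section CaInLevels

theorem occursAt_level_of_wordMap {j q : ℕ} {W : List (Fin 3)} (hW : ca <:+: W)
    (hq : OccursAt (level j) (wordMap (directive j) W) q) :
    ∃ i, q = 3 * i ∧ OccursAt (level (j + 1)) W i := by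
  obtain ⟨i, rfl⟩ := dvd_of_occursAt_wordMap (directive_eq j) (isBlockImage_level j) hW hq
  exact ⟨i, rfl, (isBlockImage_level j).occursAt_of_occursAt_wordMap (directive_injective j) hq⟩

theorem occursAt_level_of_wordMap_chain {j k q : ℕ} {W : List (Fin 3)} (hW : ca <:+: W)
    (hq : OccursAt (level j) (wordMap (chain directive j k) W) q) :
    ∃ i, q = 3 ^ k * i ∧ OccursAt (level (j + k)) W i := by
  induction k generalizing W with
  | zero => exact ⟨q, by simp, by simpa [chain, wordMap_pure] using hq⟩
  | succ k ih =>
    rw [wordMap_chain_succ] at hq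
    obtain ⟨i, rfl, hi⟩ := ih (ca_infix_wordMap (directive_eq _) hW) hq
    obtain ⟨i', rfl, hi'⟩ := occursAt_level_of_wordMap hW hi
    exact ⟨i', by ring, hi'⟩

theorem exists_occursAt_ca_level_of_add {j d P : ℕ} (h : OccursAt (level (j + d)) ca P) :
    ∃ P', P ≤ P' ∧ OccursAt (level j) ca P' := by
  induction d generalizing P with
  | zero => exact ⟨P, le_rfl, h⟩
  | succ d ih =>
    obtain ⟨P', hle, hP'⟩ :=
      ih (occursAt_ca_three_mul_add_two (directive_eq _) (isBlockImage_level _) h)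
    exact ⟨P', by omega, hP'⟩

theorem exists_occursAt_ca_level (j p : ℕ) : ∃ P, p ≤ P ∧ OccursAt (level j) ca P := by
  set J := rhoDepth j + j + 1
  obtain ⟨q, hpq, hq⟩ := exists_ne_one (directive_eq _) (isBlockImage_level (J + 1)) p
  have hτ : IsBlockImage tau3 3 (level (J + 1)) (level J) :=
    directive_rhoDepth_add_self j ▸ isBlockImage_level J
  obtain ⟨P, hP, hocc⟩ := exists_occursAt_ca_level_of_add (j := j) (d := rhoDepth j + 1)
    (by rw [show j + (rhoDepth j + 1) = J by omega]; exact occursAt_ca_of_tau hτ hq)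
  exact ⟨P, by omega, hocc⟩

theorem le_sub_of_occursAt_ca_level {d j p p' : ℕ} (hσ : ∀ l < d, directive (j + l) = sigma3)
    (hp : OccursAt (level j) ca p) (hp' : OccursAt (level j) ca p') (hlt : p < p') :
    3 ^ (d + 1) ≤ p' - p := by
  induction d generalizing j p p' with
  | zero =>
    have := mod_three_of_occursAt_ca (directive_eq j) (isBlockImage_level j) hp
    have := mod_three_of_occursAt_ca (directive_eq j) (isBlockImage_level j) hp'
    omega
  | succ d ih =>
    have hj : IsBlockImage sigma3 3 (level (j + 1)) (level j) :=
      hσ 0 d.succ_pos ▸ isBlockImage_level j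
    obtain ⟨i, rfl⟩ : ∃ i, p = 3 * i + 2 :=
      ⟨p / 3, by have := mod_three_of_occursAt_ca (.inl rfl) hj hp; omega⟩
    obtain ⟨i', rfl⟩ : ∃ i', p' = 3 * i' + 2 :=
      ⟨p' / 3, by have := mod_three_of_occursAt_ca (.inl rfl) hj hp'; omega⟩
    have := ih (fun l hl => by rw [Nat.add_right_comm]; exact hσ (l + 1) (by omega))
      (occursAt_ca_of_sigma hj hp) (occursAt_ca_of_sigma hj hp') (by omega)
    rw [pow_succ]
    omega

end CaInLevels

theorem not_linearlyRecurrent_level_zero : ¬ LinearlyRecurrent (level 0) := by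
  refine not_linearlyRecurrent_of_sparse fun K => ?_
  set D := rhoDepth K
  have hD := isBlockImage_level_chain 0 D
  rw [Nat.zero_add] at hD
  have hlen : (wordMap (chain directive 0 D) ca).length = 3 ^ D * 2 := length_wordMap hD.length_eq _
  have hpos : 0 < 3 ^ D := by positivity
  refine ⟨wordMap (chain directive 0 D) ca, List.ne_nil_of_length_pos (by omega), ?_, ?_⟩
  · obtain ⟨P, -, hP⟩ := exists_occursAt_ca_level D 0
    obtain ⟨P', hPP', hP'⟩ := exists_occursAt_ca_level D (P + 1)
    exact ⟨_, _, Nat.mul_lt_mul_of_pos_left hPP' hpos, hD.occursAt_wordMap hP,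
      hD.occursAt_wordMap hP'⟩
  · intro q q' hq hq' hlt
    obtain ⟨i, rfl, hi⟩ := occursAt_level_of_wordMap_chain (List.infix_refl _) hq
    obtain ⟨i', rfl, hi'⟩ := occursAt_level_of_wordMap_chain (List.infix_refl _) hq'
    rw [Nat.zero_add] at hi hi'
    have hgap : 3 ^ (K + 2) ≤ i' - i :=
      le_sub_of_occursAt_ca_level (d := K + 1)
        (fun l hl => directive_rhoDepth_add_of_le (n := K) (by omega)) hi hi'
        (Nat.lt_of_mul_lt_mul_left hlt)
    have hK : K * 2 < 3 ^ (K + 2) := by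
      have : K < 3 ^ K := Nat.lt_pow_self (by norm_num)
      rw [pow_add]
      omega
    calc K * (wordMap (chain directive 0 D) ca).length = 3 ^ D * (K * 2) := by rw [hlen]; ring
      _ < 3 ^ D * 3 ^ (K + 2) := Nat.mul_lt_mul_of_pos_left hK hpos
      _ ≤ 3 ^ D * (i' - i) := Nat.mul_le_mul_left _ hgap
      _ = 3 ^ D * i' - 3 ^ D * i := Nat.mul_sub _ _ _

theorem complexity_level_zero_le {n : ℕ} (hn : 1 ≤ n) : complexity (level 0) n ≤ 27 * n := by
  set k := Nat.log 3 n + 1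
  have hnk : n < 3 ^ k := Nat.lt_pow_succ_log_self (by norm_num) n
  have hkn : 3 ^ k ≤ 3 * n := by
    rw [pow_succ']
    exact Nat.mul_le_mul_left 3 (Nat.pow_log_le_self 3 (by omega))
  calc complexity (level 0) n ≤ Fintype.card (Fin 3) ^ 2 * 3 ^ k :=
        (isBlockImage_level_chain 0 k).complexity_le (by positivity) hnk.le
    _ ≤ 27 * n := by rw [Fintype.card_fin]; omega

/-- The counterexample `x = lim στσ²τ⋯σⁿτ(aaa⋯)` has linear complexity,
`p_x(n) ≤ 27 n`, although it is not linearly recurrent. -/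
theorem counterexample_linear_complexity (x : ℕ → Fin 3)
    (hx : ConvergesTo (fun n => rho n 0) 0 x) :
    (∃ C : ℕ, ∀ n ≥ 1, complexity x n ≤ C * n) ∧
    (∀ n ≥ 1, complexity x n ≤ 27 * n) ∧
    ¬ LinearlyRecurrent x := by
  obtain rfl := eq_level_zero_of_convergesTo hx
  exact ⟨⟨27, fun _ => complexity_level_zero_le⟩, fun _ => complexity_level_zero_le,
    not_linearlyRecurrent_level_zero⟩

end DurandLR
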